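/- Let G be a finite simple graph and L a list assignment with |L(v)| ≥ 5 for every vertex v. Let P = v_1⋯v_p be an induced path in G, let i be an index with 1 ≤ i ≤ p−2, and let x be a vertex of G whose set of neighbours on P is exactly {v_i, v_{i+1}, v_{i+2}}. Let φ be an L-colouring of the subgraph of G induced by V(P)∖{v_i}. If i = 1, or if φ(v_{i−1}) = φ(v_{i+1}), then φ can be extended to v_i (choosing φ(v_i) ∈ L(v_i)) so that the resulting map is an L-colouring of P and x is safe, i.e. |L(x) ∖ {φ(v_i), φ(v_{i+1}), φ(v_{i+2})}| ≥ 3. -/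

import Mathlib

/-!
Safety of `x` only involves the lists: `L x` minus the colours of `v (i+1)` and `v (i+2)`
leaves a set `A` of at least three colours, and the colour `c` of `v i` must avoid
`φ (i+1)` (and `φ (i-1)`, which equals it when `i ≠ 1`). If `|A| ≥ 4`, any such `c` leaves
three colours of `A`; if `|A| = 3`, the five colours of `L (v i)` cannot all lie in `A` or
equal `φ (i+1)`, so some `c` misses `A` altogether.
-/

open scoped Classical

variable {V : Type*}

/-- `v 1, …, v p` is an induced path in `G`: the vertices with indices `1 ≤ i ≤ p` are
pairwise distinct and two of them are adjacent iff their indices are consecutive. -/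
def IsInducedPath (G : SimpleGraph V) (p : ℕ) (v : ℕ → V) : Prop :=
  (∀ i j : ℕ, 1 ≤ i → i ≤ p → 1 ≤ j → j ≤ p → v i = v j → i = j) ∧
  (∀ i j : ℕ, 1 ≤ i → i ≤ p → 1 ≤ j → j ≤ p →
    (G.Adj (v i) (v j) ↔ (i + 1 = j ∨ j + 1 = i)))

/-- The set of path indices `1 ≤ i ≤ p` with `v i` adjacent to `z`;
its image under `v` is `N_P(z)`. -/
noncomputable def nbrIdx (G : SimpleGraph V) (p : ℕ) (v : ℕ → V) (z : V) : Finset ℕ :=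
  (Finset.Icc 1 p).filter fun i => G.Adj z (v i)

/-- `z` is adjacent to `[v i] = {v (i-1), v i, v (i+1)}` (which exists for `2 ≤ i ≤ p-1`). -/
def AdjBracket (G : SimpleGraph V) (p : ℕ) (v : ℕ → V) (i : ℕ) (z : V) : Prop :=
  2 ≤ i ∧ i < p ∧ G.Adj z (v (i - 1)) ∧ G.Adj z (v i) ∧ G.Adj z (v (i + 1))

/-- The number of vertices adjacent to `[v i]`. -/
noncomputable def bracketCount [Fintype V] (G : SimpleGraph V) (p : ℕ) (v : ℕ → V)
    (i : ℕ) : ℕ :=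
  (Finset.univ.filter fun z : V => AdjBracket G p v i z).card

/-- The number of vertices adjacent to `[v i]` or to `[v j]`. -/
noncomputable def bracketPairCount [Fintype V] (G : SimpleGraph V) (p : ℕ) (v : ℕ → V)
    (i j : ℕ) : ℕ :=
  (Finset.univ.filter fun z : V => AdjBracket G p v i z ∨ AdjBracket G p v j z).card

/-- A nice path: an induced path such that (a) every vertex with at least three neighbours
on the path is adjacent to exactly some `[v i]`, and (b) at most two vertices are adjacent
to each `[v i]`, and if two are, at most one vertex is adjacent to `[v (i-1)]` or `[v (i+1)]`. -/
def IsNicePath [Fintype V] (G : SimpleGraph V) (p : ℕ) (v : ℕ → V) : Prop :=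
  IsInducedPath G p v ∧
  (∀ z : V, 3 ≤ (nbrIdx G p v z).card →
    ∃ i : ℕ, 2 ≤ i ∧ i < p ∧ nbrIdx G p v z = {i - 1, i, i + 1}) ∧
  (∀ i : ℕ, bracketCount G p v i ≤ 2 ∧
    (bracketCount G p v i = 2 → bracketPairCount G p v (i - 1) (i + 1) ≤ 1))

/-- A great path: a nice path satisfying in addition condition (c). -/
def IsGreatPath [Fintype V] (G : SimpleGraph V) (p : ℕ) (v : ℕ → V) : Prop :=
  IsNicePath G p v ∧
  ∀ i j : ℕ, i < j → bracketCount G p v i = 2 → bracketCount G p v j = 2 →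
    bracketPairCount G p v (i + 1) (j - 1) ≤ 1

/-- A good path: either a great path, or `p ≥ 4` and there is a vertex `z ∈ Z_P` adjacent
to `v 1` with `{v 1, v 4} ⊆ N_P(z) ⊆ {v 1, v 2, v 3, v 4}` satisfying the three conditions. -/
def IsGoodPath [Fintype V] (G : SimpleGraph V) (p : ℕ) (v : ℕ → V) : Prop :=
  IsGreatPath G p v ∨
  (4 ≤ p ∧ IsInducedPath G p v ∧ ∃ z : V,
    3 ≤ (nbrIdx G p v z).card ∧
    G.Adj z (v 1) ∧ G.Adj z (v 4) ∧ nbrIdx G p v z ⊆ {1, 2, 3, 4} ∧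
    IsGreatPath (G.deleteEdges {s(v 1, z)}) p v ∧
    (2 ≤ (Finset.univ.filter fun t : V => t ≠ z ∧ AdjBracket G p v 2 t).card →
      nbrIdx G p v z = {1, 3, 4} ∧ ∀ t : V, ¬ AdjBracket G p v 3 t) ∧
    (2 ≤ (Finset.univ.filter fun t : V => t ≠ z ∧ AdjBracket G p v 3 t).card →
      nbrIdx G p v z = {1, 2, 4} ∧ ∀ t : V, ¬ AdjBracket G p v 2 t))

/-- An `L`-colouring of the path `v 1 ⋯ v p` (recording the colour of `v i` as `φ i`):
each colour belongs to the corresponding list and consecutive vertices get distinct colours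
(for an induced path these are the only adjacent pairs on the path). -/
def IsPathColouring (G : SimpleGraph V) (L : V → Finset ℕ) (p : ℕ) (v : ℕ → V)
    (φ : ℕ → ℕ) : Prop :=
  (∀ i : ℕ, 1 ≤ i → i ≤ p → φ i ∈ L (v i)) ∧
  (∀ i : ℕ, 1 ≤ i → i + 1 ≤ p → φ i ≠ φ (i + 1))

open Finset

theorem Finset.exists_mem_ne_and_le_card_erase {α : Type*} [DecidableEq α] {s A : Finset α}
    {k : ℕ} (hA : k ≤ #A) (hs : k + 2 ≤ #s) (a : α) :
    ∃ c ∈ s, c ≠ a ∧ k ≤ #(A.erase c) := by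
  rcases hA.lt_or_eq with hlt | heq
  · obtain ⟨c, hc, hca⟩ := s.exists_mem_ne (by omega) a
    exact ⟨c, hc, hca, by have := A.pred_card_le_card_erase (a := c); omega⟩
  · obtain ⟨c, hc⟩ : (s \ insert a A).Nonempty := by
      rw [← card_pos]
      have := le_card_sdiff (insert a A) s
      have := card_insert_le a A
      omega
    rw [mem_sdiff, mem_insert, not_or] at hc
    exact ⟨c, hc.1, hc.2.1, by rw [erase_eq_of_notMem hc.2.2]; omega⟩

theorem Finset.le_card_sdiff_pair {α : Type*} [DecidableEq α] {s : Finset α} {k : ℕ}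
    (hs : k + 2 ≤ #s) (a b : α) : k ≤ #(s \ {a, b}) := by
  have := le_card_sdiff {a, b} s
  have := card_le_two (a := a) (b := b)
  omega

theorem IsPathColouring.update {G : SimpleGraph V} {L : V → Finset ℕ} {p : ℕ}
    {v : ℕ → V} {φ : ℕ → ℕ} {i c : ℕ}
    (hφmem : ∀ j : ℕ, 1 ≤ j → j ≤ p → j ≠ i → φ j ∈ L (v j))
    (hφprop : ∀ j : ℕ, 1 ≤ j → j + 1 ≤ p → j ≠ i → j + 1 ≠ i → φ j ≠ φ (j + 1))
    (hc : c ∈ L (v i)) (hprev : 2 ≤ i → φ (i - 1) ≠ c) (hnext : c ≠ φ (i + 1)) :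
    IsPathColouring G L p v (Function.update φ i c) := by
  refine ⟨fun j hj1 hjp => ?_, fun j hj1 hjp => ?_⟩
  · rcases eq_or_ne j i with rfl | hji
    · simpa using hc
    · simpa [Function.update_of_ne hji] using hφmem j hj1 hjp hji
  · rcases eq_or_ne j i with rfl | hji
    · simpa using hnext
    rcases eq_or_ne (j + 1) i with rfl | hsucc
    · simpa [Function.update_of_ne hji] using hprev (by omega)
    · simpa [Function.update_of_ne hji, Function.update_of_ne hsucc] using
        hφprop j hj1 hjp hji hsucc

theorem extend_colouring_keeping_x_safe_general (G : SimpleGraph V) (L : V → Finset ℕ)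
    (hL : ∀ w : V, 5 ≤ (L w).card)
    (p : ℕ) (v : ℕ → V)
    (i : ℕ)
    (x : V)
    (φ : ℕ → ℕ)
    (hφmem : ∀ j : ℕ, 1 ≤ j → j ≤ p → j ≠ i → φ j ∈ L (v j))
    (hφprop : ∀ j : ℕ, 1 ≤ j → j + 1 ≤ p → j ≠ i → j + 1 ≠ i → φ j ≠ φ (j + 1))
    (hcond : i = 1 ∨ φ (i - 1) = φ (i + 1)) :
    ∃ c ∈ L (v i),
      IsPathColouring G L p v (Function.update φ i c) ∧
      3 ≤ (L x \ {c, φ (i + 1), φ (i + 2)}).card := by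
  obtain ⟨c, hc, hca, hsafe⟩ := (L (v i)).exists_mem_ne_and_le_card_erase
    ((L x).le_card_sdiff_pair (hL x) (φ (i + 1)) (φ (i + 2))) (hL (v i)) (φ (i + 1))
  have hprev : 2 ≤ i → φ (i - 1) ≠ c := by
    rcases hcond with rfl | heq
    · omega
    · exact fun _ => heq ▸ hca.symm
  exact ⟨c, hc, IsPathColouring.update hφmem hφprop hc hprev hca, by rwa [sdiff_insert]⟩

/-- if `x` has neighbourhood exactly `{v i, v (i+1), v (i+2)}` on the induced
path `P = v 1 ⋯ v p`, and `φ` is an `L`-colouring of `P` minus `v i` with `i = 1` or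
`φ (i-1) = φ (i+1)`, then `φ` extends to `v i` so that `x` is safe. -/
theorem extend_colouring_keeping_x_safe (G : SimpleGraph V) (L : V → Finset ℕ)
    (hL : ∀ w : V, 5 ≤ (L w).card)
    (p : ℕ) (v : ℕ → V) (hP : IsInducedPath G p v)
    (i : ℕ) (hi1 : 1 ≤ i) (hi2 : i + 2 ≤ p)
    (x : V)
    (hx : ∀ j : ℕ, 1 ≤ j → j ≤ p → (G.Adj x (v j) ↔ (j = i ∨ j = i + 1 ∨ j = i + 2)))
    (φ : ℕ → ℕ)
    (hφmem : ∀ j : ℕ, 1 ≤ j → j ≤ p → j ≠ i → φ j ∈ L (v j))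
    (hφprop : ∀ j : ℕ, 1 ≤ j → j + 1 ≤ p → j ≠ i → j + 1 ≠ i → φ j ≠ φ (j + 1))
    (hcond : i = 1 ∨ φ (i - 1) = φ (i + 1)) :
    ∃ c ∈ L (v i),
      IsPathColouring G L p v (Function.update φ i c) ∧
      3 ≤ (L x \ {c, φ (i + 1), φ (i + 2)}).card :=
  extend_colouring_keeping_x_safe_general G L hL p v i x φ hφmem hφprop hcond
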